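/- Let λ > 0, let m ≥ 0 be an integer and ℓ ≥ 0 a real number, and set p(k) = λ|k|²/(1+|k|²)² for k ∈ ℝ³. Then there exists a constant C > 0 such that for every measurable function F : ℝ³ → [0, ∞] and every t ≥ 0, ∫_{ℝ³} |k|^{2m} e^{-p(k) t} F(k) dk ≤ C (1+t)^{-3/2 - m} · ess sup_{|k| ≤ 1} F(k) + C (1+t)^{-ℓ} ∫_{|k| ≥ 1} |k|^{2m + 2ℓ} F(k) dk. -/

import Mathlib

open MeasureTheory Real
open scoped ENNReal

/-!
Split frequency space at `|k| = 1`. On the unit ball `p(k) ≥ λ|k|²/4`, and since `|k|² ≤ 1`,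
`e^{-λt|k|²/4} ≤ e^{λ/4} e^{-λ(1+t)|k|²/4}`; after bounding `F` by its essential supremum, what is
left is a Gaussian moment over all of `ℝ³`, which scales like `(1+t)^{-3/2-m}`. Outside the ball
`p(k) ≥ λ/(4|k|²)`, and with `x = t/|k|²` one has
`(1+t)^ℓ ≤ |k|^{2ℓ}(1+x)^ℓ ≤ C|k|^{2ℓ}e^{λx/4} ≤ C|k|^{2ℓ}e^{p(k)t}`, so the multiplier is at most
`C(1+t)^{-ℓ}|k|^{2m+2ℓ}` there.
-/

noncomputable def dissipationWeight (lam r : ℝ) : ℝ := lam * r ^ 2 / (1 + r ^ 2) ^ 2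

noncomputable def dissipativeMultiplier (lam : ℝ) (m : ℕ) (t r : ℝ) : ℝ :=
  r ^ (2 * m) * exp (-dissipationWeight lam r * t)

@[fun_prop]
lemma measurable_dissipativeMultiplier (lam : ℝ) (m : ℕ) (t : ℝ) :
    Measurable (dissipativeMultiplier lam m t) := by
  unfold dissipativeMultiplier dissipationWeight
  fun_prop

lemma mul_sq_le_dissipationWeight {lam r : ℝ} (hlam : 0 ≤ lam) (hr₀ : 0 ≤ r) (hr : r ≤ 1) :
    lam / 4 * r ^ 2 ≤ dissipationWeight lam r := by
  have hr2 : r ^ 2 ≤ 1 := pow_le_one₀ hr₀ hr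
  have hden : (1 + r ^ 2) ^ 2 ≤ 4 := by nlinarith
  calc lam / 4 * r ^ 2 = lam * r ^ 2 / 4 := by ring
    _ ≤ lam * r ^ 2 / (1 + r ^ 2) ^ 2 := by gcongr

lemma div_le_dissipationWeight {lam r : ℝ} (hlam : 0 ≤ lam) (hr : 1 ≤ r) :
    lam / (4 * r ^ 2) ≤ dissipationWeight lam r := by
  have hr2 : 1 ≤ r ^ 2 := one_le_pow₀ hr
  have hden : (1 + r ^ 2) ^ 2 ≤ 4 * r ^ 4 := by nlinarith
  calc lam / (4 * r ^ 2) = lam * r ^ 2 / (4 * r ^ 4) := by field_simp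
    _ ≤ lam * r ^ 2 / (1 + r ^ 2) ^ 2 := by gcongr

lemma pow_mul_exp_neg_two_mul_le {c u : ℝ} (hc : 0 < c) (hu : 0 ≤ u) (m : ℕ) :
    u ^ m * exp (-(2 * c * u)) ≤ m.factorial / c ^ m * exp (-(c * u)) := by
  have h := Real.pow_div_factorial_le_exp (c * u) (by positivity) m
  rw [mul_pow, div_le_iff₀ (by positivity)] at h
  calc u ^ m * exp (-(2 * c * u))
      = c ^ m * u ^ m / c ^ m * exp (-(2 * c * u)) := by field_simp
    _ ≤ exp (c * u) * m.factorial / c ^ m * exp (-(2 * c * u)) := by gcongr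
    _ = m.factorial / c ^ m * exp (-(c * u)) := by
        rw [show -(2 * c * u) = -(c * u) + -(c * u) by ring, exp_add, exp_neg]
        field_simp

section InnerProductSpace

variable {V : Type*} [NormedAddCommGroup V] [InnerProductSpace ℝ V] [FiniteDimensional ℝ V]
  [MeasurableSpace V] [BorelSpace V]

lemma lintegral_exp_neg_mul_sq_norm {b : ℝ} (hb : 0 < b) :
    ∫⁻ v : V, ENNReal.ofReal (exp (-b * ‖v‖ ^ 2)) =
      ENNReal.ofReal ((π / b) ^ (Module.finrank ℝ V / 2 : ℝ)) := by
  have h := GaussianFourier.integral_rexp_neg_mul_sq_norm (V := V) hb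
  have hint : Integrable (fun v : V ↦ exp (-b * ‖v‖ ^ 2)) :=
    .of_integral_ne_zero (by rw [h]; positivity)
  rw [← h, ofReal_integral_eq_lintegral_ofReal hint (.of_forall fun _ ↦ (exp_pos _).le)]

lemma exists_lintegral_pow_mul_exp_neg_mul_sq_norm_le (m : ℕ) :
    ∃ K > 0, ∀ b > 0, ∫⁻ v : V, ENNReal.ofReal (‖v‖ ^ (2 * m) * exp (-b * ‖v‖ ^ 2)) ≤
      ENNReal.ofReal (K * b ^ (-(Module.finrank ℝ V : ℝ) / 2 - m)) := by
  set d : ℝ := (Module.finrank ℝ V : ℝ) / 2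
  refine ⟨m.factorial * 2 ^ m * (2 * π) ^ d, by positivity, fun b hb ↦ ?_⟩
  rw [show -(Module.finrank ℝ V : ℝ) / 2 - m = -(d + m) by ring]
  have hc : 0 < b / 2 := by positivity
  calc ∫⁻ v : V, ENNReal.ofReal (‖v‖ ^ (2 * m) * exp (-b * ‖v‖ ^ 2))
      ≤ ∫⁻ v : V, ENNReal.ofReal (m.factorial / (b / 2) ^ m) *
          ENNReal.ofReal (exp (-(b / 2) * ‖v‖ ^ 2)) := by
        refine lintegral_mono fun v ↦ ?_
        rw [← ENNReal.ofReal_mul (by positivity)]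
        refine ENNReal.ofReal_le_ofReal ?_
        calc ‖v‖ ^ (2 * m) * exp (-b * ‖v‖ ^ 2)
            = (‖v‖ ^ 2) ^ m * exp (-(2 * (b / 2) * ‖v‖ ^ 2)) := by ring_nf
          _ ≤ m.factorial / (b / 2) ^ m * exp (-(b / 2 * ‖v‖ ^ 2)) :=
            pow_mul_exp_neg_two_mul_le hc (sq_nonneg ‖v‖) m
          _ = m.factorial / (b / 2) ^ m * exp (-(b / 2) * ‖v‖ ^ 2) := by ring_nf
    _ = ENNReal.ofReal (m.factorial / (b / 2) ^ m * (π / (b / 2)) ^ d) := by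
        rw [lintegral_const_mul' _ _ ENNReal.ofReal_ne_top, lintegral_exp_neg_mul_sq_norm hc,
          ← ENNReal.ofReal_mul (by positivity)]
    _ = ENNReal.ofReal (m.factorial * 2 ^ m * (2 * π) ^ d * b ^ (-(d + m))) := by
        rw [rpow_neg hb.le, rpow_add hb, rpow_natCast,
          div_div_eq_mul_div, div_rpow (by positivity) hb.le, mul_comm π, div_pow]
        field_simp

lemma exists_setLIntegral_dissipativeMultiplier_le_of_norm_le_one {lam : ℝ} (hlam : 0 < lam)
    (m : ℕ) :
    ∃ C > 0, ∀ t ≥ 0, ∫⁻ k in {k : V | ‖k‖ ≤ 1}, ENNReal.ofReal (dissipativeMultiplier lam m t ‖k‖) ≤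
      ENNReal.ofReal (C * (1 + t) ^ (-(Module.finrank ℝ V : ℝ) / 2 - m)) := by
  obtain ⟨K, hK, hgauss⟩ := exists_lintegral_pow_mul_exp_neg_mul_sq_norm_le (V := V) m
  set a := lam / 4
  set e := -(Module.finrank ℝ V : ℝ) / 2 - m
  have ha : 0 < a := by positivity
  refine ⟨exp a * K * a ^ e, by positivity, fun t ht ↦ ?_⟩
  have hpt : ∀ k ∈ {k : V | ‖k‖ ≤ 1}, ENNReal.ofReal (dissipativeMultiplier lam m t ‖k‖) ≤
      ENNReal.ofReal (exp a) * ENNReal.ofReal (‖k‖ ^ (2 * m) * exp (-(a * (1 + t)) * ‖k‖ ^ 2)) := by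
    intro k hk
    rw [← ENNReal.ofReal_mul (exp_pos a).le]
    refine ENNReal.ofReal_le_ofReal ?_
    have hp : a * ‖k‖ ^ 2 ≤ _ := mul_sq_le_dissipationWeight hlam.le (norm_nonneg k) hk
    have hk2 : ‖k‖ ^ 2 ≤ 1 := pow_le_one₀ (norm_nonneg k) hk
    calc dissipativeMultiplier lam m t ‖k‖
        ≤ ‖k‖ ^ (2 * m) * exp (a + -(a * (1 + t)) * ‖k‖ ^ 2) := by
          unfold dissipativeMultiplier
          gcongr
          nlinarith [mul_le_mul_of_nonneg_right hp ht, mul_le_mul_of_nonneg_left hk2 ha.le]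
      _ = _ := by rw [exp_add]; ring
  calc ∫⁻ k in {k : V | ‖k‖ ≤ 1}, ENNReal.ofReal (dissipativeMultiplier lam m t ‖k‖)
      ≤ ∫⁻ k in {k : V | ‖k‖ ≤ 1}, ENNReal.ofReal (exp a) *
          ENNReal.ofReal (‖k‖ ^ (2 * m) * exp (-(a * (1 + t)) * ‖k‖ ^ 2)) :=
        setLIntegral_mono' (measurableSet_le (by fun_prop) (by fun_prop)) hpt
    _ ≤ ∫⁻ k, ENNReal.ofReal (exp a) *
          ENNReal.ofReal (‖k‖ ^ (2 * m) * exp (-(a * (1 + t)) * ‖k‖ ^ 2)) :=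
        setLIntegral_le_lintegral _ _
    _ ≤ ENNReal.ofReal (exp a) * ENNReal.ofReal (K * (a * (1 + t)) ^ e) := by
        rw [lintegral_const_mul' _ _ ENNReal.ofReal_ne_top]
        gcongr
        exact hgauss _ (by positivity)
    _ = ENNReal.ofReal (exp a * K * a ^ e * (1 + t) ^ e) := by
        rw [← ENNReal.ofReal_mul (exp_pos a).le, mul_rpow ha.le (by positivity)]
        ring_nf

end InnerProductSpace

lemma exists_one_add_rpow_le_mul_exp {a l : ℝ} (ha : 0 < a) (hl : 0 ≤ l) :
    ∃ M > 0, ∀ x ≥ 0, (1 + x) ^ l ≤ M * exp (a * x) := by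
  set ε := a / (l + 1)
  have hε : 0 < ε := by positivity
  set M := max 1 ε⁻¹
  refine ⟨M ^ l, by positivity, fun x hx ↦ ?_⟩
  have hMε : 1 ≤ M * ε := (inv_le_iff_one_le_mul₀ hε).mp (le_max_right _ _)
  have hlin : 1 + x ≤ M * exp (ε * x) :=
    calc 1 + x ≤ M * (ε * x + 1) := by nlinarith [le_max_left 1 ε⁻¹]
      _ ≤ M * exp (ε * x) := by gcongr; exact add_one_le_exp _
  have hεl : ε * l ≤ a := by
    rw [div_mul_eq_mul_div, div_le_iff₀ (by positivity)]
    nlinarith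
  calc (1 + x) ^ l ≤ (M * exp (ε * x)) ^ l := by gcongr
    _ = M ^ l * exp (ε * l * x) := by
        rw [mul_rpow (by positivity) (exp_pos _).le, ← exp_mul]
        ring_nf
    _ ≤ M ^ l * exp (a * x) := by gcongr

lemma exists_dissipativeMultiplier_le_of_one_le {lam l : ℝ} (hlam : 0 < lam) (hl : 0 ≤ l)
    (m : ℕ) :
    ∃ C > 0, ∀ t ≥ 0, ∀ r ≥ 1,
      dissipativeMultiplier lam m t r ≤ C * (1 + t) ^ (-l) * r ^ (2 * (m : ℝ) + 2 * l) := by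
  obtain ⟨M, hM, hpoly⟩ := exists_one_add_rpow_le_mul_exp (a := lam / 4) (by positivity) hl
  refine ⟨M, hM, fun t ht r hr ↦ ?_⟩
  have hr₀ : 0 < r := zero_lt_one.trans_le hr
  have hr2 : 1 ≤ r ^ 2 := one_le_pow₀ hr
  have hgrowth : (1 + t) ^ l ≤ M * r ^ (2 * l) * exp (dissipationWeight lam r * t) :=
    calc (1 + t) ^ l ≤ (r ^ 2 * (1 + t / r ^ 2)) ^ l := by
          gcongr
          rw [mul_add, mul_div_cancel₀ _ (by positivity)]
          linarith
      _ = r ^ (2 * l) * (1 + t / r ^ 2) ^ l := by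
          rw [mul_rpow (by positivity) (by positivity), ← rpow_natCast, ← rpow_mul hr₀.le]
          norm_num
      _ ≤ r ^ (2 * l) * (M * exp (lam / 4 * (t / r ^ 2))) := by
          gcongr
          exact hpoly _ (by positivity)
      _ ≤ r ^ (2 * l) * (M * exp (dissipationWeight lam r * t)) := by
          gcongr r ^ (2 * l) * (M * exp ?_)
          calc lam / 4 * (t / r ^ 2) = lam / (4 * r ^ 2) * t := by ring
            _ ≤ dissipationWeight lam r * t := by
                gcongr
                exact div_le_dissipationWeight hlam.le hr
      _ = M * r ^ (2 * l) * exp (dissipationWeight lam r * t) := by ring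
  have h1t : 0 < 1 + t := by linarith
  have hdecay : exp (-dissipationWeight lam r * t) ≤ M * (1 + t) ^ (-l) * r ^ (2 * l) :=
    calc exp (-dissipationWeight lam r * t)
        = (1 + t) ^ l * (1 + t) ^ (-l) * exp (-dissipationWeight lam r * t) := by
          rw [← rpow_add h1t, add_neg_cancel, rpow_zero, one_mul]
      _ ≤ M * r ^ (2 * l) * exp (dissipationWeight lam r * t) * (1 + t) ^ (-l) *
            exp (-dissipationWeight lam r * t) := by gcongr
      _ = M * (1 + t) ^ (-l) * r ^ (2 * l) := by
          rw [neg_mul, exp_neg]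
          field_simp
  calc dissipativeMultiplier lam m t r
      ≤ r ^ (2 * m) * (M * (1 + t) ^ (-l) * r ^ (2 * l)) := by
        unfold dissipativeMultiplier
        gcongr
    _ = M * (1 + t) ^ (-l) * r ^ (2 * (m : ℝ) + 2 * l) := by
        rw [rpow_add hr₀, show 2 * (m : ℝ) = (2 * m : ℕ) by push_cast; ring, rpow_natCast]
        ring

section Lintegral

variable {α : Type*} [MeasurableSpace α] {μ : Measure α}

lemma lintegral_mul_le_lintegral_mul_essSup {g : α → ℝ≥0∞} (hg : AEMeasurable g μ)
    (F : α → ℝ≥0∞) : ∫⁻ x, g x * F x ∂μ ≤ (∫⁻ x, g x ∂μ) * essSup F μ :=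
  calc ∫⁻ x, g x * F x ∂μ ≤ ∫⁻ x, g x * essSup F μ ∂μ :=
        lintegral_mono_ae ((ENNReal.ae_le_essSup F).mono fun x hx ↦ by gcongr)
    _ = (∫⁻ x, g x ∂μ) * essSup F μ := lintegral_mul_const'' _ hg

lemma setLIntegral_mul_le_const_mul {s : Set α} (hs : MeasurableSet s) {g h : α → ℝ≥0∞}
    {c : ℝ≥0∞} (hc : c ≠ ∞) (hgh : ∀ x ∈ s, g x ≤ c * h x) (F : α → ℝ≥0∞) :
    ∫⁻ x in s, g x * F x ∂μ ≤ c * ∫⁻ x in s, h x * F x ∂μ := by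
  rw [← lintegral_const_mul' _ _ hc]
  refine setLIntegral_mono' hs fun x hx ↦ ?_
  rw [← mul_assoc]
  gcongr
  exact hgh x hx

end Lintegral

theorem stmt_2 (lam : ℝ) (hlam : 0 < lam) (m : ℕ) (l : ℝ) (hl : 0 ≤ l) :
    ∃ C : ℝ, 0 < C ∧ ∀ F : EuclideanSpace ℝ (Fin 3) → ℝ≥0∞, Measurable F →
      ∀ t : ℝ, 0 ≤ t →
      (∫⁻ k, ENNReal.ofReal
            (‖k‖ ^ (2 * m) * Real.exp (-(lam * ‖k‖ ^ 2 / (1 + ‖k‖ ^ 2) ^ 2) * t)) * F k)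
        ≤ ENNReal.ofReal (C * (1 + t) ^ (-(3 : ℝ) / 2 - (m : ℝ))) *
            essSup F (volume.restrict {k : EuclideanSpace ℝ (Fin 3) | ‖k‖ ≤ 1})
          + ENNReal.ofReal (C * (1 + t) ^ (-l)) *
            ∫⁻ k in {k : EuclideanSpace ℝ (Fin 3) | 1 ≤ ‖k‖},
              ENNReal.ofReal (‖k‖ ^ (2 * (m : ℝ) + 2 * l)) * F k := by
  obtain ⟨Cl, hCl, hlow⟩ := exists_setLIntegral_dissipativeMultiplier_le_of_norm_le_one
    (V := EuclideanSpace ℝ (Fin 3)) hlam m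
  obtain ⟨Ch, hCh, hhigh⟩ := exists_dissipativeMultiplier_le_of_one_le hlam hl m
  refine ⟨max Cl Ch, lt_max_of_lt_left hCl, fun F _ t ht ↦ ?_⟩
  rw [finrank_euclideanSpace_fin, Nat.cast_ofNat] at hlow
  set g := fun k : EuclideanSpace ℝ (Fin 3) ↦ ENNReal.ofReal (dissipativeMultiplier lam m t ‖k‖)
  have hcover : {k : EuclideanSpace ℝ (Fin 3) | ‖k‖ ≤ 1} ∪ {k | 1 ≤ ‖k‖} = Set.univ :=
    Set.eq_univ_of_forall fun k ↦ le_total ‖k‖ 1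
  calc ∫⁻ k, g k * F k
      ≤ (∫⁻ k in {k | ‖k‖ ≤ 1}, g k * F k) + ∫⁻ k in {k | 1 ≤ ‖k‖}, g k * F k := by
        rw [← setLIntegral_univ, ← hcover]
        exact lintegral_union_le _ _ _
    _ ≤ _ := by
        gcongr ?_ + ?_
        · refine (lintegral_mul_le_lintegral_mul_essSup (by fun_prop) F).trans ?_
          gcongr
          exact (hlow t ht).trans (by gcongr; exact le_max_left _ _)
        · have hpt : ∀ k ∈ {k : EuclideanSpace ℝ (Fin 3) | 1 ≤ ‖k‖}, g k ≤
              ENNReal.ofReal (Ch * (1 + t) ^ (-l)) * ENNReal.ofReal (‖k‖ ^ (2 * (m : ℝ) + 2 * l)) :=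
            fun k hk ↦ by
              rw [← ENNReal.ofReal_mul (by positivity)]
              exact ENNReal.ofReal_le_ofReal (hhigh t ht _ hk)
          refine (setLIntegral_mul_le_const_mul (measurableSet_le (by fun_prop) (by fun_prop))
            ENNReal.ofReal_ne_top hpt F).trans ?_
          gcongr
          exact le_max_right _ _
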